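/- arXiv:math/0505148 — 2 statements merged into one kernel-verified Lean document; each statement's English description precedes it below -/
import Mathlib

section
/- Let x, y ∈ ℤ² be non-collinear lattice vectors, and for z = (a,b) ∈ ℤ² \ {0} let deg(z) = gcd(|a|,|b|). Then |det(x,y)| = deg(x) + deg(y) + deg(x+y) − 2 + 2·I, where I is the number of lattice points lying in the interior of the triangle with vertices 0, x, x+y. -/
/-- The image of a lattice point in the real plane. -/
def toR2 (p : ℤ × ℤ) : ℝ × ℝ := ((p.1 : ℝ), (p.2 : ℝ))

/-- The triangle (convex hull) with vertices `0`, `x`, `x + y` in the real plane. -/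
def tri (x y : ℤ × ℤ) : Set (ℝ × ℝ) := convexHull ℝ {(0 : ℝ × ℝ), toR2 x, toR2 (x + y)}

/-!
The lattice `Λ` spanned by `x` and `y` has index `|det(x, y)|` in `ℤ²`, so the half-open
parallelogram `{s x + t y | 0 ≤ s, t < 1}`, a fundamental domain of `Λ`, contains exactly
`|det(x, y)|` lattice points. These are the vertex `0`, the `deg w - 1` lattice points inside each
of the open segments from `0` to `w = x, y, x + y`, and the lattice points of the two open
triangles into which the diagonal cuts the parallelogram; the point reflection
`p ↦ x + y - p` exchanges the two triangles. A reflection of the plane reduces everything to the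
case `det(x, y) > 0`.
-/

open Set

section Wedge

variable {R : Type*} [CommRing R]

/-- `wedge p q` is `det(p, q)`. -/
def wedge : R × R →ₗ[R] R × R →ₗ[R] R :=
  LinearMap.mk₂ R (fun p q => p.1 * q.2 - p.2 * q.1)
    (fun _ _ _ => by simp only [Prod.fst_add, Prod.snd_add]; ring)
    (fun _ _ _ => by simp only [Prod.smul_fst, Prod.smul_snd, smul_eq_mul]; ring)
    (fun _ _ _ => by simp only [Prod.fst_add, Prod.snd_add]; ring)
    (fun _ _ _ => by simp only [Prod.smul_fst, Prod.smul_snd, smul_eq_mul]; ring)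

lemma wedge_apply (p q : R × R) : wedge p q = p.1 * q.2 - p.2 * q.1 := rfl

@[simp] lemma wedge_self (p : R × R) : wedge p p = 0 := by
  rw [wedge_apply, mul_comm, sub_self]

lemma wedge_anticomm (p q : R × R) : wedge q p = -wedge p q := by
  simp only [wedge_apply]; ring

lemma wedge_swap (p q : R × R) : wedge p.swap q.swap = -wedge p q := by
  simp only [wedge_apply, Prod.fst_swap, Prod.snd_swap]; ring

/-- Cramer's rule. -/
lemma wedge_smul_eq_add (a b p : R × R) : wedge a b • p = wedge p b • a + wedge a p • b := by
  ext <;> simp only [wedge_apply, Prod.smul_fst, Prod.smul_snd, Prod.fst_add, Prod.snd_add,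
    smul_eq_mul] <;> ring

lemma exists_eq_smul_of_wedge_eq_zero {a p : R × R} (ha : IsCoprime a.1 a.2)
    (h : wedge a p = 0) : ∃ m : R, p = m • a := by
  obtain ⟨s, t, hst⟩ := ha
  rw [wedge_apply] at h
  refine ⟨s * p.1 + t * p.2, Prod.ext ?_ ?_⟩
  · simp only [Prod.smul_fst, smul_eq_mul]; linear_combination (-p.1) * hst - t * h
  · simp only [Prod.smul_snd, smul_eq_mul]; linear_combination (-p.2) * hst + s * h

lemma det_coprod_toSpanSingleton (a b : R × R) :
    LinearMap.det ((LinearMap.toSpanSingleton R _ a).coprod (LinearMap.toSpanSingleton R _ b)) =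
      wedge a b := by
  rw [← LinearMap.det_toMatrix (Module.Basis.finTwoProd R), Matrix.det_fin_two, wedge_apply]
  simp [LinearMap.toMatrix_apply]
  ring

end Wedge

lemma natCard_quotient_range_eq_natAbs_det {M : Type*} [AddCommGroup M] [Module.Free ℤ M]
    [Module.Finite ℤ M] (f : M →ₗ[ℤ] M) (hf : Function.Injective f) :
    Nat.card (M ⧸ LinearMap.range f) = (LinearMap.det f).natAbs := by
  rw [← Submodule.natAbs_det_equiv _ (LinearEquiv.ofInjective f hf)]
  rfl

lemma exists_isCoprime_gcd_smul_eq {w : ℤ × ℤ} (hw : w ≠ 0) :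
    ∃ w₀ : ℤ × ℤ, IsCoprime w₀.1 w₀.2 ∧ (Int.gcd w.1 w.2 : ℤ) • w₀ = w := by
  have hg : 0 < Int.gcd w.1 w.2 := Int.gcd_pos_iff.2 (by contrapose! hw; exact Prod.ext hw.1 hw.2)
  obtain ⟨a, b, hab, ha, hb⟩ := Int.exists_gcd_one hg
  refine ⟨(a, b), Int.isCoprime_iff_gcd_eq_one.2 hab, Prod.ext ?_ ?_⟩
  · simp only [Prod.smul_fst, smul_eq_mul]; linear_combination -ha
  · simp only [Prod.smul_snd, smul_eq_mul]; linear_combination -hb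

/-- The lattice points strictly between `0` and `w`, with `F` as a coordinate along the line
through `w`. -/
lemma ncard_setOf_wedge_eq_zero_add_one (w : ℤ × ℤ) (F : ℤ × ℤ →ₗ[ℤ] ℤ) (hw : 0 < F w) :
    {p | wedge w p = 0 ∧ 0 < F p ∧ F p < F w}.ncard + 1 = Int.gcd w.1 w.2 := by
  obtain ⟨w₀, hcop, hw₀⟩ := exists_isCoprime_gcd_smul_eq (w := w) (by rintro rfl; simp at hw)
  set g : ℤ := (Int.gcd w.1 w.2 : ℤ)
  have hFw : F w = g * F w₀ := by rw [← hw₀, map_zsmul, smul_eq_mul]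
  have hFw₀ : 0 < F w₀ := pos_of_mul_pos_right (hFw ▸ hw) (Int.natCast_nonneg _)
  have hg : 0 < g := pos_of_mul_pos_left (hFw ▸ hw) hFw₀.le
  have hS : {p | wedge w p = 0 ∧ 0 < F p ∧ F p < F w} = (· • w₀) '' Ioo 0 g := by
    ext p
    simp only [mem_ofPred_eq, mem_image, mem_Ioo]
    constructor
    · rintro ⟨hcol, hpos, hlt⟩
      rw [← hw₀, map_zsmul, LinearMap.smul_apply, smul_eq_mul, mul_eq_zero] at hcol
      obtain ⟨m, rfl⟩ := exists_eq_smul_of_wedge_eq_zero hcop (hcol.resolve_left hg.ne')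
      simp only [map_zsmul, smul_eq_mul] at hpos hlt
      rw [hFw] at hlt
      exact ⟨m, ⟨pos_of_mul_pos_left hpos hFw₀.le, lt_of_mul_lt_mul_right hlt hFw₀.le⟩, rfl⟩
    · rintro ⟨m, ⟨hm0, hmg⟩, rfl⟩
      simp only [← hw₀, map_zsmul, LinearMap.smul_apply, wedge_self, smul_eq_mul, mul_zero]
      exact ⟨trivial, mul_pos hm0 hFw₀, mul_lt_mul_of_pos_right hmg hFw₀⟩
  have hinj : Function.Injective (· • w₀ : ℤ → ℤ × ℤ) :=
    smul_left_injective ℤ (by rintro rfl; simp at hFw₀)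
  rw [hS, ncard_image_of_injective _ hinj, ← Finset.coe_Ioo, ncard_coe_finset, Int.card_Ioo]
  simp only [g] at hg ⊢
  omega

lemma eq_zero_of_sub_eq_mul {s t d k : ℤ} (hs : 0 ≤ s) (hsd : s < d) (ht : 0 ≤ t) (htd : t < d)
    (h : s - t = k * d) : k = 0 := by
  have hkd : k * d = 0 :=
    Int.eq_zero_of_abs_lt_dvd (dvd_mul_left d k) (by rw [abs_lt]; constructor <;> linarith)
  exact (mul_eq_zero.1 hkd).resolve_right (by linarith)

section Lattice

variable (x y : ℤ × ℤ)

def spanPair : ℤ × ℤ →ₗ[ℤ] ℤ × ℤ :=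
  (LinearMap.toSpanSingleton ℤ _ x).coprod (LinearMap.toSpanSingleton ℤ _ y)

lemma spanPair_apply (c : ℤ × ℤ) : spanPair x y c = c.1 • x + c.2 • y := by
  simp [spanPair]

lemma wedge_spanPair_left (c : ℤ × ℤ) : wedge (spanPair x y c) y = c.1 * wedge x y := by
  simp only [spanPair_apply, map_add, map_zsmul, LinearMap.add_apply, LinearMap.smul_apply,
    wedge_self, smul_eq_mul, mul_zero, add_zero]

lemma wedge_spanPair_right (c : ℤ × ℤ) : wedge x (spanPair x y c) = c.2 * wedge x y := by
  simp only [spanPair_apply, map_add, map_zsmul, wedge_self, smul_eq_mul, mul_zero, zero_add]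

/- By Cramer's rule `wedge p y` and `wedge x p` are the coordinates of `p` in the basis `x, y`,
scaled by `wedge x y`: for `wedge x y > 0` the next two sets are the lattice points of the
half-open parallelogram `{s x + t y | 0 ≤ s, t < 1}` and of the open triangle `0 < t < s < 1`. -/

def parallelogramPoints : Set (ℤ × ℤ) :=
  {p | 0 ≤ wedge p y ∧ wedge p y < wedge x y ∧ 0 ≤ wedge x p ∧ wedge x p < wedge x y}

def openTrianglePoints : Set (ℤ × ℤ) :=
  {p | 0 < wedge x p ∧ wedge x p < wedge p y ∧ wedge p y < wedge x y}

variable {x y}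

lemma parallelogramPoints_eq_union (h : 0 < wedge x y) :
    parallelogramPoints x y = {p | wedge p y = 0 ∧ wedge x p = 0} ∪
      ({p | wedge x p = 0 ∧ 0 < wedge p y ∧ wedge p y < wedge x y} ∪
      ({p | wedge y p = 0 ∧ 0 < wedge x p ∧ wedge x p < wedge x y} ∪
      ({p | wedge (x + y) p = 0 ∧ 0 < wedge p y ∧ wedge p y < wedge (x + y) y} ∪
      (openTrianglePoints x y ∪
        {p | 0 < wedge p y ∧ wedge p y < wedge x p ∧ wedge x p < wedge x y})))) := by
  ext p
  simp only [parallelogramPoints, openTrianglePoints, mem_ofPred_eq, mem_union, map_add,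
    LinearMap.add_apply, wedge_self, wedge_anticomm p y]
  omega

lemma spanPair_injective (h : wedge x y ≠ 0) : Function.Injective (spanPair x y) := by
  rw [← LinearMap.ker_eq_bot, LinearMap.ker_eq_bot']
  intro c hc
  have h1 := wedge_spanPair_left x y c
  have h2 := wedge_spanPair_right x y c
  rw [hc, map_zero, LinearMap.zero_apply, eq_comm, mul_eq_zero] at h1
  rw [hc, map_zero, eq_comm, mul_eq_zero] at h2
  exact Prod.ext (h1.resolve_right h) (h2.resolve_right h)

lemma bijective_mk_parallelogramPoints (h : 0 < wedge x y) :
    Function.Bijective fun p : parallelogramPoints x y =>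
      (Submodule.Quotient.mk p.1 : (ℤ × ℤ) ⧸ LinearMap.range (spanPair x y)) := by
  constructor
  · rintro ⟨p, hp1, hp2, hp3, hp4⟩ ⟨q, hq1, hq2, hq3, hq4⟩ hpq
    obtain ⟨c, hc⟩ := (Submodule.Quotient.eq _).1 hpq
    have h1 := wedge_spanPair_left x y c
    have h2 := wedge_spanPair_right x y c
    simp only [hc, map_sub, LinearMap.sub_apply] at h1 h2
    have hc0 : c = 0 :=
      Prod.ext (eq_zero_of_sub_eq_mul hp1 hp2 hq1 hq2 h1) (eq_zero_of_sub_eq_mul hp3 hp4 hq3 hq4 h2)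
    rw [hc0, map_zero, eq_comm, sub_eq_zero] at hc
    exact Subtype.ext hc
  · intro z
    obtain ⟨z, rfl⟩ := Submodule.Quotient.mk_surjective _ z
    set c : ℤ × ℤ := (wedge z y / wedge x y, wedge x z / wedge x y)
    have h1 : wedge (z - spanPair x y c) y = wedge z y % wedge x y := by
      rw [map_sub, LinearMap.sub_apply, wedge_spanPair_left, Int.emod_def]
      ring
    have h2 : wedge x (z - spanPair x y c) = wedge x z % wedge x y := by
      rw [map_sub, wedge_spanPair_right, Int.emod_def]
      ring
    refine ⟨⟨z - spanPair x y c, ?_⟩, ?_⟩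
    · rw [parallelogramPoints, mem_ofPred_eq, h1, h2]
      exact ⟨Int.emod_nonneg _ h.ne', Int.emod_lt_of_pos _ h, Int.emod_nonneg _ h.ne',
        Int.emod_lt_of_pos _ h⟩
    · exact (Submodule.Quotient.eq _).2 ⟨-c, by simp [spanPair_apply]; abel⟩

lemma ncard_parallelogramPoints (h : 0 < wedge x y) :
    (parallelogramPoints x y).ncard = (wedge x y).natAbs := by
  rw [← Nat.card_coe_set_eq, Nat.card_eq_of_bijective _ (bijective_mk_parallelogramPoints h),
    natCard_quotient_range_eq_natAbs_det _ (spanPair_injective h.ne'), spanPair,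
    det_coprod_toSpanSingleton]

lemma setOf_wedge_eq_zero_and_wedge_eq_zero (h : wedge x y ≠ 0) :
    {p | wedge p y = 0 ∧ wedge x p = 0} = {0} := by
  ext p
  refine ⟨fun ⟨h1, h2⟩ => ?_, fun hp => by simp [mem_singleton_iff.1 hp]⟩
  have hp := wedge_smul_eq_add x y p
  rw [h1, h2, zero_smul, zero_smul, add_zero, smul_eq_zero] at hp
  exact hp.resolve_left h

lemma ncard_reflected_openTrianglePoints :
    {p | 0 < wedge p y ∧ wedge p y < wedge x p ∧ wedge x p < wedge x y}.ncard =
      (openTrianglePoints x y).ncard := by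
  have hinv : Function.Involutive (x + y - · : ℤ × ℤ → ℤ × ℤ) := fun p => sub_sub_cancel _ _
  rw [← ncard_preimage_of_injective_subset_range hinv.injective
    (by rw [hinv.surjective.range_eq]; exact subset_univ _)]
  congr 1
  ext p
  simp only [openTrianglePoints, mem_preimage, mem_ofPred_eq, map_sub, map_add,
    LinearMap.sub_apply, LinearMap.add_apply, wedge_self]
  omega

theorem pick_formula_openTrianglePoints (h : 0 < wedge x y) :
    wedge x y + 2 = Int.gcd x.1 x.2 + Int.gcd y.1 y.2 + Int.gcd (x + y).1 (x + y).2 +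
      2 * (openTrianglePoints x y).ncard := by
  have h0 : {p | wedge p y = 0 ∧ wedge x p = 0}.ncard = 1 := by
    rw [setOf_wedge_eq_zero_and_wedge_eq_zero h.ne', ncard_singleton]
  have hx := ncard_setOf_wedge_eq_zero_add_one x (wedge.flip y) h
  have hy := ncard_setOf_wedge_eq_zero_add_one y (wedge x) h
  have hxy := ncard_setOf_wedge_eq_zero_add_one (x + y) (wedge.flip y) (by simpa using h)
  simp only [LinearMap.flip_apply] at hx hxy
  have hT := ncard_reflected_openTrianglePoints (x := x) (y := y)
  have hP := ncard_parallelogramPoints h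
  have hfin : (parallelogramPoints x y).Finite := finite_of_ncard_pos (by omega)
  rw [parallelogramPoints_eq_union h, ncard_union_eq ?_ ?_ ?_, ncard_union_eq ?_ ?_ ?_,
    ncard_union_eq ?_ ?_ ?_, ncard_union_eq ?_ ?_ ?_, ncard_union_eq ?_ ?_ ?_] at hP
  · omega
  -- the remaining goals: finiteness and pairwise disjointness of the pieces
  all_goals first
    | refine hfin.subset fun p => ?_
    | refine disjoint_left.2 fun p => ?_
  all_goals
    simp only [parallelogramPoints, openTrianglePoints, mem_ofPred_eq, mem_union, map_add,
      LinearMap.add_apply, wedge_self, wedge_anticomm p y]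
    omega

end Lattice

lemma interior_preimage_of_apply_ne_zero {E : Type*} [NormedAddCommGroup E] [NormedSpace ℝ E]
    [FiniteDimensional ℝ E] (f : E →ₗ[ℝ] ℝ) {v : E} (hv : f v ≠ 0) (s : Set ℝ) :
    interior (f ⁻¹' s) = f ⁻¹' interior s := by
  have hf : Function.Surjective f := fun c =>
    ⟨(c / f v) • v, by rw [map_smul, smul_eq_mul, div_mul_cancel₀ _ hv]⟩
  exact ((f.isOpenMap_of_finiteDimensional hf).preimage_interior_eq_interior_preimage
    f.continuous_of_finiteDimensional s).symm

section Triangle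

variable {a b : ℝ × ℝ}

lemma setOf_triangle_eq_inter_preimage :
    {q | 0 ≤ wedge a q ∧ wedge a q ≤ wedge q b ∧ wedge q b ≤ wedge a b} =
      wedge a ⁻¹' Ici 0 ∩ (wedge.flip b - wedge a) ⁻¹' Ici 0 ∩
        wedge.flip b ⁻¹' Iic (wedge a b) := by
  ext q
  simp only [mem_ofPred_eq, mem_inter_iff, mem_preimage, mem_Ici, mem_Iic, LinearMap.sub_apply,
    LinearMap.flip_apply, sub_nonneg, and_assoc]

lemma convexHull_zero_self_add_eq (h : 0 < wedge a b) :
    convexHull ℝ {0, a, a + b} =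
      {q | 0 ≤ wedge a q ∧ wedge a q ≤ wedge q b ∧ wedge q b ≤ wedge a b} := by
  apply Subset.antisymm
  · refine convexHull_min ?_ ?_
    · simp [insert_subset_iff, h.le]
    · rw [setOf_triangle_eq_inter_preimage]
      exact (((convex_Ici 0).linear_preimage _).inter ((convex_Ici 0).linear_preimage _)).inter
        ((convex_Iic _).linear_preimage _)
  · rintro q ⟨h1, h2, h3⟩
    set s := wedge q b / wedge a b
    set t := wedge a q / wedge a b
    have hq : (1 - s) • (0 : ℝ × ℝ) + (s - t) • a + t • (a + b) = q := by
      have e := Prod.ext_iff.1 (wedge_smul_eq_add a b q)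
      simp only [Prod.smul_fst, Prod.smul_snd, Prod.fst_add, Prod.snd_add, smul_eq_mul] at e
      ext <;> simp only [s, t, Prod.smul_fst, Prod.smul_snd, Prod.fst_add, Prod.snd_add,
        Prod.fst_zero, Prod.snd_zero, smul_eq_mul] <;> field_simp
      · linear_combination -e.1
      · linear_combination -e.2
    have hst : t ≤ s := div_le_div_of_nonneg_right h2 h.le
    have hs1 : s ≤ 1 := div_le_one_of_le₀ h3 h.le
    have ht0 : 0 ≤ t := div_nonneg h1 h.le
    have hw : ∀ i ∈ Finset.univ, 0 ≤ ![1 - s, s - t, t] i := by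
      intro i _; fin_cases i <;> simp <;> linarith
    have hz : ∀ i ∈ Finset.univ, ![0, a, a + b] i ∈ convexHull ℝ {0, a, a + b} := by
      intro i _; fin_cases i <;> exact subset_convexHull ℝ _ (by simp)
    have hmem := (convex_convexHull ℝ _).sum_mem hw (by simp [Fin.sum_univ_three]) hz
    simpa [Fin.sum_univ_three, ← hq, add_assoc] using hmem

lemma interior_convexHull_zero_self_add_eq (h : 0 < wedge a b) :
    interior (convexHull ℝ {0, a, a + b}) =
      {q | 0 < wedge a q ∧ wedge a q < wedge q b ∧ wedge q b < wedge a b} := by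
  have hab : wedge a b ≠ 0 := h.ne'
  rw [convexHull_zero_self_add_eq h, setOf_triangle_eq_inter_preimage, interior_inter,
    interior_inter, interior_preimage_of_apply_ne_zero (wedge a) hab,
    interior_preimage_of_apply_ne_zero (wedge.flip b - wedge a) (v := a) (by simpa using hab),
    interior_preimage_of_apply_ne_zero (wedge.flip b) (v := a) hab, interior_Ici, interior_Iic]
  ext q
  simp only [mem_ofPred_eq, mem_inter_iff, mem_preimage, mem_Ioi, mem_Iio, LinearMap.sub_apply,
    LinearMap.flip_apply, sub_pos, and_assoc]

end Triangle

lemma toR2_add (p q : ℤ × ℤ) : toR2 (p + q) = toR2 p + toR2 q := by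
  ext <;> simp [toR2]

lemma wedge_toR2 (p q : ℤ × ℤ) : wedge (toR2 p) (toR2 q) = wedge p q := by
  simp [toR2, wedge_apply]

lemma setOf_toR2_mem_interior_tri {x y : ℤ × ℤ} (h : 0 < wedge x y) :
    {p | toR2 p ∈ interior (tri x y)} = openTrianglePoints x y := by
  rw [tri, toR2_add, interior_convexHull_zero_self_add_eq (by rwa [wedge_toR2, Int.cast_pos])]
  ext p
  simp only [openTrianglePoints, mem_ofPred_eq, wedge_toR2, Int.cast_pos, Int.cast_lt]

lemma ncard_setOf_toR2_mem_interior_tri_swap (x y : ℤ × ℤ) :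
    {p | toR2 p ∈ interior (tri x.swap y.swap)}.ncard =
      {p | toR2 p ∈ interior (tri x y)}.ncard := by
  have htri : tri x.swap y.swap = Prod.swap '' tri x y := by
    have hswap : IsLinearMap ℝ (Prod.swap : ℝ × ℝ → ℝ × ℝ) :=
      (LinearEquiv.prodComm ℝ ℝ ℝ).toLinearMap.isLinear
    rw [tri, tri, hswap.image_convexHull]
    simp [image_insert_eq, toR2]
  have hset : {p | toR2 p ∈ interior (tri x.swap y.swap)} =
      Prod.swap ⁻¹' {p | toR2 p ∈ interior (tri x y)} := by
    rw [htri, ← Homeomorph.coe_prodComm, ← Homeomorph.image_interior]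
    ext p
    simp [image_swap_eq_preimage_swap, toR2]
  rw [hset, ncard_preimage_of_injective_subset_range Prod.swap_injective
    (by rw [Prod.swap_surjective.range_eq]; exact subset_univ _)]

lemma pick_formula_of_wedge_pos {x y : ℤ × ℤ} (h : 0 < wedge x y) :
    wedge x y + 2 = Int.gcd x.1 x.2 + Int.gcd y.1 y.2 + Int.gcd (x + y).1 (x + y).2 +
      2 * {p | toR2 p ∈ interior (tri x y)}.ncard := by
  rw [setOf_toR2_mem_interior_tri h]
  exact pick_formula_openTrianglePoints h

/-- Pick's formula: for non-collinear lattice vectors `x, y`,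
`|det(x,y)| = deg x + deg y + deg (x+y) - 2 + 2 I` where `I` is the number
of interior lattice points of the triangle with vertices `0, x, x+y`. -/
theorem pick_formula (x y : ℤ × ℤ) (h : x.1 * y.2 - x.2 * y.1 ≠ 0) :
    ((x.1 * y.2 - x.2 * y.1).natAbs : ℤ) =
      (Int.gcd x.1 x.2 : ℤ) + (Int.gcd y.1 y.2 : ℤ) + (Int.gcd (x + y).1 (x + y).2 : ℤ) - 2 +
        2 * ({p : ℤ × ℤ | toR2 p ∈ interior (tri x y)}.ncard : ℤ) := by
  rcases h.lt_or_gt with hneg | hpos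
  · have hswap : 0 < wedge x.swap y.swap := by rw [wedge_swap, wedge_apply]; omega
    have key := pick_formula_of_wedge_pos hswap
    rw [ncard_setOf_toR2_mem_interior_tri_swap, wedge_swap, wedge_apply] at key
    simp only [Prod.fst_swap, Prod.snd_swap, Prod.fst_add, Prod.snd_add] at key ⊢
    rw [Int.gcd_comm x.2, Int.gcd_comm y.2, Int.gcd_comm (x.2 + y.2)] at key
    omega
  · have key := pick_formula_of_wedge_pos hpos
    rw [wedge_apply] at key
    omega
end

section
/- Fix α ∈ ℤ² with first coordinate rank(α) ≥ 0 lying in (ℤ²)⁺ = {(q,p) : q ≥ 1, or q = 0 and p ≥ 0}, and fix a rational number m. Then there are only finitely many finite sequences (α₁, …, α_t) of elements of (ℤ²)⁺ \ {(0,0)} such that α₁ + ⋯ + α_t = α and the slopes satisfy m ≤ μ(α₁) < μ(α₂) < ⋯ < μ(α_t), where μ(r,d) = d/r for r > 0 and μ(0,d) = +∞. -/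
/-!
Every term `αᵢ` lies in the cone `{(r, d) : r ≥ 0, d ≥ m r}`, which is closed under addition, so
`α - αᵢ`, the sum of the remaining terms, lies in it too. A pointed cone contains only finitely many
`a` with `α - a` also in it, so the terms come from a finite set; and a list strictly increasing in
slope is determined by its set of terms.
-/

/-- The region `(ℤ²)⁺ = {(q,p) : q ≥ 1, or q = 0 and p ≥ 0}`. -/
def Zplus (p : ℤ × ℤ) : Prop := 1 ≤ p.1 ∨ (p.1 = 0 ∧ 0 ≤ p.2)

/-- The hallSlope `μ(r,d) = d/r` for `r > 0` and `μ(0,d) = +∞`. -/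
noncomputable def hallSlope (p : ℤ × ℤ) : WithTop ℚ :=
  if 0 < p.1 then (((p.2 : ℚ) / (p.1 : ℚ) : ℚ) : WithTop ℚ) else ⊤

theorem Set.Finite.finite_isChain_comp_lt {α β : Type*} [Preorder β] {s : Set α} (hs : s.Finite)
    (f : α → β) : {l : List α | (∀ a ∈ l, a ∈ s) ∧ l.IsChain fun a b => f a < f b}.Finite := by
  have hpairwise : ∀ l : List α, (l.IsChain fun a b => f a < f b) →
      l.Pairwise fun a b => f a < f b := fun l hl =>
    List.pairwise_map.mp (List.isChain_iff_pairwise.mp (List.isChain_map f |>.mpr hl))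
  refine Set.Finite.of_finite_image (f := fun l : List α => {a | a ∈ l}) ?_ ?_
  · refine hs.finite_subsets.subset ?_
    rintro _ ⟨l, ⟨hl, -⟩, rfl⟩
    exact hl
  · rintro l₁ ⟨-, hl₁⟩ l₂ ⟨-, hl₂⟩ hset
    have hperm : l₁.Perm l₂ :=
      (List.perm_ext_iff_of_nodup ((hpairwise l₁ hl₁).imp fun h => ne_of_apply_ne f h.ne)
        ((hpairwise l₂ hl₂).imp fun h => ne_of_apply_ne f h.ne)).mpr (Set.ext_iff.mp hset)
    exact hperm.eq_of_pairwise (fun a b _ _ hab hba => absurd hab (lt_asymm hba))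
      (hpairwise l₁ hl₁) (hpairwise l₂ hl₂)

theorem AddSubmonoid.list_sum_sub_mem {G : Type*} [AddCommGroup G] (S : AddSubmonoid G)
    {l : List G} (hl : ∀ x ∈ l, x ∈ S) {a : G} (ha : a ∈ l) : l.sum - a ∈ S := by
  classical
  rw [← List.sum_erase ha, add_sub_cancel_left]
  exact S.list_sum_mem fun x hx => hl x (List.mem_of_mem_erase hx)

def slopeCone (m : ℚ) : AddSubmonoid (ℤ × ℤ) where
  carrier := {a | 0 ≤ a.1 ∧ m * a.1 ≤ a.2}
  add_mem' := by
    rintro a b ⟨ha₁, ha₂⟩ ⟨hb₁, hb₂⟩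
    refine ⟨add_nonneg ha₁ hb₁, ?_⟩
    simp only [Prod.fst_add, Prod.snd_add, Int.cast_add]
    linarith
  zero_mem' := by simp

theorem mem_slopeCone_of_le_hallSlope {m : ℚ} {a : ℤ × ℤ} (ha : Zplus a)
    (hslope : (m : WithTop ℚ) ≤ hallSlope a) : a ∈ slopeCone m := by
  rcases ha with ha₁ | ⟨ha₁, ha₂⟩
  · have hpos : (0 : ℚ) < a.1 := by exact_mod_cast ha₁
    rw [hallSlope, if_pos (by omega), WithTop.coe_le_coe, le_div_iff₀ hpos] at hslope
    exact ⟨by omega, hslope⟩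
  · exact ⟨ha₁.ge, by simp [ha₁, ha₂]⟩

theorem finite_setOf_mem_slopeCone_and_sub_mem (m : ℚ) (α : ℤ × ℤ) :
    {a | a ∈ slopeCone m ∧ α - a ∈ slopeCone m}.Finite := by
  refine ((Set.finite_Icc 0 α.1).biUnion fun r _ =>
    (Set.finite_Icc ⌈m * r⌉ ⌊α.2 - m * α.1 + m * r⌋).image (Prod.mk r)).subset ?_
  rintro ⟨r, d⟩ ⟨⟨hr, hd⟩, hr', hd'⟩
  simp only [Prod.fst_sub, Prod.snd_sub, Int.cast_sub] at hr hd hr' hd'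
  refine Set.mem_biUnion (x := r) ⟨hr, by omega⟩ ⟨d, ⟨Int.ceil_le.mpr hd, Int.le_floor.mpr ?_⟩, rfl⟩
  linarith

theorem finitely_many_HN_types_general (α : ℤ × ℤ) (m : ℚ) :
    {l : List (ℤ × ℤ) |
        (∀ a ∈ l, Zplus a ∧ a ≠ 0) ∧ l.sum = α ∧
        (∀ a ∈ l, (m : WithTop ℚ) ≤ hallSlope a) ∧
        l.Chain' fun a b => hallSlope a < hallSlope b}.Finite := by
  refine ((finite_setOf_mem_slopeCone_and_sub_mem m α).finite_isChain_comp_lt hallSlope).subset ?_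
  rintro l ⟨hmem, rfl, hslope, hchain⟩
  have hcone : ∀ a ∈ l, a ∈ slopeCone m := fun a ha =>
    mem_slopeCone_of_le_hallSlope (hmem a ha).1 (hslope a ha)
  exact ⟨fun a ha => ⟨hcone a ha, (slopeCone m).list_sum_sub_mem hcone ha⟩, hchain⟩

/-- For fixed `α ∈ (ℤ²)⁺` and a rational `m`, there are only finitely many sequences
`(α₁, …, α_t)` in `(ℤ²)⁺ \ {0}` with `α₁ + ⋯ + α_t = α` and
`m ≤ μ(α₁) < μ(α₂) < ⋯ < μ(α_t)`. -/
theorem finitely_many_HN_types (α : ℤ × ℤ) (hα : Zplus α) (m : ℚ) :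
    {l : List (ℤ × ℤ) |
        (∀ a ∈ l, Zplus a ∧ a ≠ 0) ∧ l.sum = α ∧
        (∀ a ∈ l, (m : WithTop ℚ) ≤ hallSlope a) ∧
        l.Chain' fun a b => hallSlope a < hallSlope b}.Finite :=
  finitely_many_HN_types_general α m
end
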